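/- Let H be a nontrivial finite group and let a₁, c₁, a₂, c₂ ∈ H satisfy: (1) the orders of a₁ and c₁ are even; (2) a₁², a₁c₁, c₁² generate H; (3) a₂, c₂ generate H; (4) gcd(ord(a₁)·ord(c₁)·ord(a₁c₁), ord(a₂)·ord(c₂)·ord(a₂c₂)) = 1. Let G := H_{[4]} = (H × H) ⋊ ℤ/4ℤ, where the generator of ℤ/4ℤ acts by swapping the two factors, and let G⁰ := H × H × 2ℤ/4ℤ ≤ G. Then with a := (a₁, a₂, 2) and c := (c₁, c₂, 2), the triple (G⁰; a, c) is a mixed Beauville quadruple on G (for any choice of g ∈ G ∖ G⁰). -/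

import Mathlib

/-- The swap automorphism `Θ(x,y) = (y,x)` of `H × H`. -/
def swapAut (H : Type*) [Group H] : MulAut (H × H) :=
  (MulEquiv.prodComm : (H × H) ≃* (H × H))

lemma swapAut_sq (H : Type*) [Group H] : swapAut H ^ 2 = 1 := by
  ext x <;> simp [swapAut, pow_two]

/-- The action of `ℤ/4` on `H × H` where the generator `1` acts by the swap `Θ`. -/
def swapAction (H : Type*) [Group H] : Multiplicative (ZMod 4) →* MulAut (H × H) where
  toFun z := swapAut H ^ (z.toAdd.val)
  map_one' := by simp [ZMod.val] <;> exact pow_zero _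
  map_mul' x y := by
    have h2 : ∀ n : ℕ, swapAut H ^ n = swapAut H ^ (n % 2) := fun n =>
      pow_eq_pow_mod n (swapAut_sq H)
    rw [h2 (Multiplicative.toAdd (x * y)).val, h2 (Multiplicative.toAdd x).val,
      h2 (Multiplicative.toAdd y).val, ← pow_add,
      h2 ((Multiplicative.toAdd x).val % 2 + (Multiplicative.toAdd y).val % 2)]
    congr 1
    have hv : (Multiplicative.toAdd (x * y)).val
        = ((Multiplicative.toAdd x).val + (Multiplicative.toAdd y).val) % 4 := by
      simpa using ZMod.val_add (Multiplicative.toAdd x) (Multiplicative.toAdd y)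
    omega

/-- `H_[4] := (H × H) ⋊ ℤ/4`, the generator of `ℤ/4` acting by the swap. -/
abbrev Hfour (H : Type*) [Group H] :=
  SemidirectProduct (H × H) (Multiplicative (ZMod 4)) (swapAction H)

/-- `H_[2] := H × H × 2ℤ/4ℤ`, the index two subgroup of `H_[4]`. -/
def Htwo (H : Type*) [Group H] : Subgroup (Hfour H) :=
  Subgroup.comap SemidirectProduct.rightHom
    (Subgroup.zpowers (Multiplicative.ofAdd (2 : ZMod 4)))

/-- For a subgroup `G⁰ ≤ G` and `a c : G`, `Σ(a,c)` is the union over all `h ∈ G⁰`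
and all `i ≥ 0` of the conjugates `h a^i h⁻¹`, `h c^i h⁻¹`, `h (ac)^i h⁻¹`. -/
def mixedSigma {G : Type*} [Group G] (G0 : Subgroup G) (a c : G) : Set G :=
  ⋃ h ∈ G0, ⋃ i : ℕ, {h * a ^ i * h⁻¹, h * c ^ i * h⁻¹, h * (a * c) ^ i * h⁻¹}

section Helpers
variable {H : Type*} [Group H]

lemma swapAut_even {n : ℕ} (h : n % 2 = 0) : swapAut H ^ n = 1 := by
  rw [pow_eq_pow_mod n (swapAut_sq H), h, pow_zero]

lemma swapAut_odd {n : ℕ} (h : n % 2 = 1) : swapAut H ^ n = swapAut H := by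
  rw [pow_eq_pow_mod n (swapAut_sq H), h, pow_one]

lemma swapAction_eq_one {z : Multiplicative (ZMod 4)} (h : (Multiplicative.toAdd z).val % 2 = 0) :
    swapAction H z = 1 := swapAut_even h

lemma swapAction_eq_swap {z : Multiplicative (ZMod 4)} (h : (Multiplicative.toAdd z).val % 2 = 1) :
    swapAction H z = swapAut H := swapAut_odd h

lemma mem_Htwo_iff {x : Hfour H} :
    x ∈ Htwo H ↔ (Multiplicative.toAdd x.right = 0 ∨ Multiplicative.toAdd x.right = 2) := by
  constructor
  · rintro ⟨k, hk⟩
    have : Multiplicative.toAdd x.right = k • (2 : ZMod 4) := by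
      have : Multiplicative.toAdd (SemidirectProduct.rightHom x) = k • (2 : ZMod 4) := by
        rw [← hk]; simp
      simpa [SemidirectProduct.rightHom_eq_right] using this
    rw [this, zsmul_eq_mul]
    have : ∀ m : ZMod 4, m * 2 = 0 ∨ m * 2 = 2 := by decide
    exact this _
  · intro h
    rcases h with h | h
    · refine ⟨0, ?_⟩
      show (1 : Multiplicative (ZMod 4)) = x.right
      have : Multiplicative.toAdd x.right = Multiplicative.toAdd (1 : Multiplicative (ZMod 4)) := by
        simpa using h
      exact (Multiplicative.toAdd.injective this).symm
    · refine ⟨1, ?_⟩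
      show (Multiplicative.ofAdd (2:ZMod 4)) ^ (1:ℤ) = x.right
      have : Multiplicative.toAdd x.right
          = Multiplicative.toAdd ((Multiplicative.ofAdd (2:ZMod 4)) ^ (1:ℤ)) := by
        simpa using h
      exact (Multiplicative.toAdd.injective this).symm

end Helpers

section Helpers2
variable {H : Type*} [Group H]

local notation "σ" => Multiplicative.ofAdd (2 : ZMod 4)

lemma sigma_sq : (σ : Multiplicative (ZMod 4)) ^ 2 = 1 := by decide

lemma sigma_mul_self : (σ : Multiplicative (ZMod 4)) * σ = 1 := by decide

lemma sigma_pow_even {i : ℕ} (h : i % 2 = 0) : (σ : Multiplicative (ZMod 4)) ^ i = 1 := by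
  rw [pow_eq_pow_mod i sigma_sq, h, pow_zero]

lemma sigma_pow_odd {i : ℕ} (h : i % 2 = 1) : (σ : Multiplicative (ZMod 4)) ^ i = σ := by
  rw [pow_eq_pow_mod i sigma_sq, h, pow_one]

lemma swapAction_sigma : swapAction H σ = 1 :=
  swapAction_eq_one (by decide)

lemma swapAction_sigma_pow (i : ℕ) : swapAction H ((σ : Multiplicative (ZMod 4)) ^ i) = 1 := by
  rcases Nat.even_or_odd i with h | h
  · rw [sigma_pow_even (Nat.even_iff.mp h)]; exact map_one _
  · rw [sigma_pow_odd (Nat.odd_iff.mp h)]; exact swapAction_sigma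

lemma mem_Htwo_action {x : Hfour H} (hx : x ∈ Htwo H) : swapAction H x.right = 1 := by
  rcases mem_Htwo_iff.mp hx with h | h <;>
    exact swapAction_eq_one (by rw [h]; decide)

lemma mk_mul_mk (p q : H × H) (z w : Multiplicative (ZMod 4)) (hz : swapAction H z = 1) :
    (⟨p, z⟩ : Hfour H) * ⟨q, w⟩ = ⟨p * q, z * w⟩ :=
  SemidirectProduct.ext (by rw [SemidirectProduct.mul_left, hz]; rfl) rfl

lemma mk_pow (p : H × H) (z : Multiplicative (ZMod 4)) (hz : swapAction H z = 1) (n : ℕ) :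
    (⟨p, z⟩ : Hfour H) ^ n = ⟨p ^ n, z ^ n⟩ := by
  induction n with
  | zero => exact SemidirectProduct.ext (pow_zero p).symm (pow_zero z).symm
  | succ n ih =>
    have hzn : swapAction H (z ^ n) = 1 := by rw [map_pow, hz, one_pow]
    rw [pow_succ, ih, mk_mul_mk _ _ _ _ hzn, ← pow_succ, ← pow_succ]

lemma conj_mk (h x : Hfour H) (h1 : swapAction H h.right = 1) (h2 : swapAction H x.right = 1) :
    h * x * h⁻¹ = ⟨h.left * x.left * h.left⁻¹, x.right⟩ := by
  refine SemidirectProduct.ext ?_ ?_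
  · simp [SemidirectProduct.mul_left, SemidirectProduct.inv_left, h1, h2, map_mul, map_inv]
  · simp [SemidirectProduct.mul_right, SemidirectProduct.inv_right]

lemma sigma_mem {α₁ α₂ γ₁ γ₂ : H} {s : Hfour H}
    (hs : s ∈ mixedSigma (Htwo H) (⟨(α₁, α₂), σ⟩ : Hfour H) (⟨(γ₁, γ₂), σ⟩ : Hfour H)) :
    ∃ i : ℕ, ∃ x y : H,
      s = ⟨(x * α₁ ^ i * x⁻¹, y * α₂ ^ i * y⁻¹), σ ^ i⟩ ∨
      s = ⟨(x * γ₁ ^ i * x⁻¹, y * γ₂ ^ i * y⁻¹), σ ^ i⟩ ∨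
      s = ⟨(x * (α₁ * γ₁) ^ i * x⁻¹, y * (α₂ * γ₂) ^ i * y⁻¹), 1⟩ := by
  simp only [mixedSigma, Set.mem_iUnion, Set.mem_insert_iff, Set.mem_singleton_iff] at hs
  obtain ⟨h, hh, i, hcase⟩ := hs
  have hφ := mem_Htwo_action hh
  have hac : (⟨(α₁, α₂), σ⟩ : Hfour H) * ⟨(γ₁, γ₂), σ⟩ = ⟨(α₁ * γ₁, α₂ * γ₂), 1⟩ := by
    rw [mk_mul_mk _ _ _ _ swapAction_sigma]
    exact SemidirectProduct.ext rfl sigma_mul_self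
  refine ⟨i, h.left.1, h.left.2, ?_⟩
  rcases hcase with hc | hc | hc
  · left
    rw [hc, mk_pow _ _ swapAction_sigma, conj_mk _ _ hφ (swapAction_sigma_pow i)]
    exact SemidirectProduct.ext (Prod.ext (by simp) (by simp)) rfl
  · right; left
    rw [hc, mk_pow _ _ swapAction_sigma, conj_mk _ _ hφ (swapAction_sigma_pow i)]
    exact SemidirectProduct.ext (Prod.ext (by simp) (by simp)) rfl
  · right; right
    rw [hc, hac, mk_pow _ _ (map_one _), conj_mk _ _ hφ (by rw [one_pow]; exact map_one _)]
    exact SemidirectProduct.ext (Prod.ext (by simp) (by simp)) (one_pow i)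

end Helpers2

section Helpers3
variable {G : Type*} [Group G]

lemma orderOf_conj' (x b : G) : orderOf (x * b * x⁻¹) = orderOf b := by
  have := orderOf_injective ((MulAut.conj x) : G →* G) (MulAut.conj x).injective b
  simpa [MulAut.conj] using this

lemma orderOf_mul_comm' (a b : G) : orderOf (a * b) = orderOf (b * a) := by
  have := orderOf_conj' a⁻¹ (a * b)
  rw [show a⁻¹ * (a * b) * a⁻¹⁻¹ = b * a by group] at this
  exact this.symm

lemma exists_pow_eq' [Finite G] {b : G} {n : ℕ} (h : Nat.Coprime n (orderOf b)) :
    ∃ m, (b ^ n) ^ m = b := by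
  rcases Nat.lt_or_ge 1 (orderOf b) with hlt | hle
  · obtain ⟨m, -, hm⟩ := Nat.exists_mul_mod_eq_one_of_coprime h hlt
    refine ⟨m, ?_⟩
    rw [← pow_mul, ← pow_mod_orderOf, hm, pow_one]
  · have : orderOf b = 1 := le_antisymm hle (orderOf_pos b)
    have hb : b = 1 := orderOf_eq_one_iff.mp this
    exact ⟨1, by simp [hb]⟩

end Helpers3

lemma Htwo_index_two (H : Type*) [Group H] : (Htwo H).index = 2 := by
  rw [Htwo, Subgroup.index_comap_of_surjective _ SemidirectProduct.rightHom_surjective]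
  have hord : orderOf (Multiplicative.ofAdd (2 : ZMod 4)) = 2 :=
    orderOf_eq_prime sigma_sq (by decide)
  have hcard := Subgroup.card_mul_index (Subgroup.zpowers (Multiplicative.ofAdd (2 : ZMod 4)))
  rw [Nat.card_zpowers, hord] at hcard
  have : Nat.card (Multiplicative (ZMod 4)) = 4 := by
    simp [Nat.card_eq_fintype_card]
  omega

section ClosureLemma
variable {H : Type*} [Group H] [Finite H]

open Subgroup

/-- helper: from `(b₁,b₂) ∈ K` with `b₂^n = 1` and `n` coprime to `orderOf b₁`,
get `(b₁,1) ∈ K`. -/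
lemma fst_mem_of_mem {K : Subgroup (H × H)} {b₁ b₂ : H} {n : ℕ}
    (hmem : (b₁, b₂) ∈ K) (hb₂ : b₂ ^ n = 1) (hco : Nat.Coprime n (orderOf b₁)) :
    (b₁, (1 : H)) ∈ K := by
  have h1 : ((b₁, b₂) : H × H) ^ n ∈ K := pow_mem hmem n
  have h2 : ((b₁, b₂) : H × H) ^ n = (b₁ ^ n, 1) := by
    rw [Prod.pow_mk, hb₂]
  rw [h2] at h1
  obtain ⟨m, hm⟩ := exists_pow_eq' hco
  have h3 : ((b₁ ^ n, (1 : H)) : H × H) ^ m ∈ K := pow_mem h1 m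
  have h4 : ((b₁ ^ n, (1 : H)) : H × H) ^ m = (b₁, 1) := by
    rw [Prod.pow_mk, hm, one_pow]
  rwa [h4] at h3

lemma snd_mem_of_mem {K : Subgroup (H × H)} {b₁ b₂ : H} {n : ℕ}
    (hmem : (b₁, b₂) ∈ K) (hb₁ : b₁ ^ n = 1) (hco : Nat.Coprime n (orderOf b₂)) :
    ((1 : H), b₂) ∈ K := by
  have h1 : ((b₁, b₂) : H × H) ^ n ∈ K := pow_mem hmem n
  have h2 : ((b₁, b₂) : H × H) ^ n = (1, b₂ ^ n) := by
    rw [Prod.pow_mk, hb₁]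
  rw [h2] at h1
  obtain ⟨m, hm⟩ := exists_pow_eq' hco
  have h3 : (((1 : H), b₂ ^ n) : H × H) ^ m ∈ K := pow_mem h1 m
  have h4 : (((1 : H), b₂ ^ n) : H × H) ^ m = (1, b₂) := by
    rw [Prod.pow_mk, hm, one_pow]
  rwa [h4] at h3

end ClosureLemma

section ClosureMain
variable {H : Type*} [Group H] [Finite H]

open Subgroup

local notation "σ" => Multiplicative.ofAdd (2 : ZMod 4)

lemma closure_eq_Htwo (a₁ c₁ a₂ c₂ : H)
    (h1 : Even (orderOf a₁) ∧ Even (orderOf c₁))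
    (h2 : Subgroup.closure {a₁ ^ 2, a₁ * c₁, c₁ ^ 2} = ⊤)
    (h3 : Subgroup.closure {a₂, c₂} = ⊤)
    (h4 : Nat.Coprime (orderOf a₁ * orderOf c₁ * orderOf (a₁ * c₁))
      (orderOf a₂ * orderOf c₂ * orderOf (a₂ * c₂))) :
    Subgroup.closure {(⟨(a₁, a₂), σ⟩ : Hfour H), ⟨(c₁, c₂), σ⟩} = Htwo H := by
  set n₁ := orderOf a₁ * orderOf c₁ * orderOf (a₁ * c₁) with hn₁
  set n₂ := orderOf a₂ * orderOf c₂ * orderOf (a₂ * c₂) with hn₂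
  set a : Hfour H := ⟨(a₁, a₂), σ⟩ with ha
  set c : Hfour H := ⟨(c₁, c₂), σ⟩ with hc
  set P := Subgroup.closure {a, c} with hP
  -- basic dvd facts
  have hda₁ : orderOf a₁ ∣ n₁ := Dvd.dvd.mul_right (dvd_mul_right _ _) _
  have hdc₁ : orderOf c₁ ∣ n₁ := Dvd.dvd.mul_right (dvd_mul_left _ _) _
  have hdac₁ : orderOf (a₁ * c₁) ∣ n₁ := dvd_mul_left _ _
  have hda₂ : orderOf a₂ ∣ n₂ := Dvd.dvd.mul_right (dvd_mul_right _ _) _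
  have hdc₂ : orderOf c₂ ∣ n₂ := Dvd.dvd.mul_right (dvd_mul_left _ _) _
  have hdac₂ : orderOf (a₂ * c₂) ∣ n₂ := dvd_mul_left _ _
  -- n₂ is odd
  have h2n₁ : 2 ∣ n₁ := dvd_trans h1.1.two_dvd hda₁
  have hco2n₂ : Nat.Coprime 2 n₂ := Nat.Coprime.coprime_dvd_left h2n₁ h4
  -- memberships of the three generators of K
  have haP : a ∈ P := subset_closure (by simp)
  have hcP : c ∈ P := subset_closure (by simp)
  set K := P.comap (SemidirectProduct.inl :
      (H × H) →* Hfour H) with hK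
  have hKa : ((a₁ * a₁, a₂ * a₂) : H × H) ∈ K := by
    rw [hK, Subgroup.mem_comap]
    have : SemidirectProduct.inl ((a₁ * a₁, a₂ * a₂) : H × H) = a * a := by
      rw [ha, mk_mul_mk _ _ _ _ swapAction_sigma, sigma_mul_self]; rfl
    rw [this]; exact mul_mem haP haP
  have hKac : ((a₁ * c₁, a₂ * c₂) : H × H) ∈ K := by
    rw [hK, Subgroup.mem_comap]
    have : SemidirectProduct.inl ((a₁ * c₁, a₂ * c₂) : H × H) = a * c := by
      rw [ha, hc, mk_mul_mk _ _ _ _ swapAction_sigma, sigma_mul_self]; rfl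
    rw [this]; exact mul_mem haP hcP
  have hKc : ((c₁ * c₁, c₂ * c₂) : H × H) ∈ K := by
    rw [hK, Subgroup.mem_comap]
    have : SemidirectProduct.inl ((c₁ * c₁, c₂ * c₂) : H × H) = c * c := by
      rw [hc, mk_mul_mk _ _ _ _ swapAction_sigma, sigma_mul_self]; rfl
    rw [this]; exact mul_mem hcP hcP
  -- split memberships
  have split1 : ∀ b₁ b₂ : H, (b₁, b₂) ∈ K → orderOf b₁ ∣ n₁ → orderOf b₂ ∣ n₂ →
      ((b₁, (1:H)) ∈ K ∧ ((1:H), b₂) ∈ K) := by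
    intro b₁ b₂ hm hd₁ hd₂
    constructor
    · refine fst_mem_of_mem hm (orderOf_dvd_iff_pow_eq_one.mp hd₂) ?_
      exact Nat.Coprime.coprime_dvd_right hd₁ h4.symm
    · refine snd_mem_of_mem hm (orderOf_dvd_iff_pow_eq_one.mp hd₁) ?_
      exact Nat.Coprime.coprime_dvd_right hd₂ h4
  have hsq : ∀ b : H, orderOf (b * b) ∣ orderOf b := by
    intro b; rw [← pow_two]; exact orderOf_pow_dvd 2
  obtain ⟨hK1a, hK2a⟩ := split1 (a₁ * a₁) (a₂ * a₂) hKa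
    ((hsq a₁).trans hda₁) ((hsq a₂).trans hda₂)
  obtain ⟨hK1ac, hK2ac⟩ := split1 (a₁ * c₁) (a₂ * c₂) hKac hdac₁ hdac₂
  obtain ⟨hK1c, hK2c⟩ := split1 (c₁ * c₁) (c₂ * c₂) hKc
    ((hsq c₁).trans hdc₁) ((hsq c₂).trans hdc₂)
  -- first factor: H × 1 ⊆ K
  have hfst : ∀ u : H, ((u, (1:H)) : H × H) ∈ K := by
    have : Subgroup.closure {a₁ ^ 2, a₁ * c₁, c₁ ^ 2} ≤ K.comap (MonoidHom.inl H H) := by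
      rw [Subgroup.closure_le]
      rintro x (rfl | rfl | rfl)
      · simpa [pow_two] using hK1a
      · exact hK1ac
      · simpa [pow_two] using hK1c
    rw [h2, top_le_iff] at this
    intro u
    have : u ∈ K.comap (MonoidHom.inl H H) := this ▸ Subgroup.mem_top u
    simpa using this
  -- second factor: 1 × H ⊆ K
  have hsnd : ∀ v : H, (((1:H), v) : H × H) ∈ K := by
    have h2a : (((1:H), a₂) : H × H) ∈ K := by
      obtain ⟨m, hm⟩ := exists_pow_eq'
        (Nat.Coprime.coprime_dvd_right hda₂ hco2n₂ : Nat.Coprime 2 (orderOf a₂))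
      have := pow_mem hK2a m
      rwa [Prod.pow_mk, one_pow, ← pow_two, hm] at this
    have h2c : (((1:H), c₂) : H × H) ∈ K := by
      obtain ⟨m, hm⟩ := exists_pow_eq'
        (Nat.Coprime.coprime_dvd_right hdc₂ hco2n₂ : Nat.Coprime 2 (orderOf c₂))
      have := pow_mem hK2c m
      rwa [Prod.pow_mk, one_pow, ← pow_two, hm] at this
    have : Subgroup.closure {a₂, c₂} ≤ K.comap (MonoidHom.inr H H) := by
      rw [Subgroup.closure_le]
      rintro x (rfl | rfl)
      · simpa using h2a
      · simpa using h2c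
    rw [h3, top_le_iff] at this
    intro v
    have : v ∈ K.comap (MonoidHom.inr H H) := this ▸ Subgroup.mem_top v
    simpa using this
  have hKtop : ∀ p : H × H, p ∈ K := by
    rintro ⟨u, v⟩
    have := mul_mem (hfst u) (hsnd v)
    simpa using this
  -- conclude
  apply le_antisymm
  · rw [Subgroup.closure_le]
    rintro x (rfl | rfl) <;> exact mem_Htwo_iff.mpr (Or.inr rfl)
  · intro x hx
    rcases mem_Htwo_iff.mp hx with h | h
    · have hr : x.right = 1 := Multiplicative.toAdd.injective (by simpa using h)
      have : x = SemidirectProduct.inl x.left :=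
        SemidirectProduct.ext rfl hr
      rw [this]
      exact hKtop x.left
    · have hr : x.right = σ := Multiplicative.toAdd.injective (by simpa using h)
      have hxeq : x = SemidirectProduct.inl (x.left * (a₁, a₂)⁻¹) * a := by
        have : (SemidirectProduct.inl (x.left * (a₁, a₂)⁻¹) : Hfour H)
            = ⟨x.left * (a₁, a₂)⁻¹, 1⟩ := rfl
        rw [this, ha, mk_mul_mk _ _ _ _ (map_one _)]
        exact SemidirectProduct.ext (by group) (by rw [hr, one_mul])
      rw [hxeq]
      exact mul_mem (hKtop _) haP

end ClosureMain

section Helpers4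
variable {H : Type*} [Group H]

local notation "σ" => Multiplicative.ofAdd (2 : ZMod 4)

lemma conj_eq_one' {G : Type*} [Group G] {x b : G} (h : x * b * x⁻¹ = 1) : b = 1 := by
  have : x * b * x⁻¹ = x * 1 * x⁻¹ := by rw [h]; group
  simpa using mul_left_cancel (mul_right_cancel this)

lemma conj_mul_conj {G : Type*} [Group G] (x a b : G) :
    (x * a * x⁻¹) * (x * b * x⁻¹) = x * (a * b) * x⁻¹ := by group

lemma one_mem_mixedSigma {G : Type*} [Group G] (G0 : Subgroup G) (a c : G) :
    (1 : G) ∈ mixedSigma G0 a c := by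
  simp only [mixedSigma, Set.mem_iUnion, Set.mem_insert_iff, Set.mem_singleton_iff]
  exact ⟨1, G0.one_mem, 0, Or.inl (by simp)⟩

lemma not_mem_Htwo_parity {g : Hfour H} (hg : g ∉ Htwo H) :
    (Multiplicative.toAdd g.right).val % 2 = 1 := by
  rw [mem_Htwo_iff] at hg
  push_neg at hg
  revert hg
  generalize Multiplicative.toAdd g.right = z
  revert z; decide

lemma sigma_pow_right_two {i : ℕ}
    (h : Multiplicative.toAdd ((σ : Multiplicative (ZMod 4)) ^ i) = 2) : i % 2 = 1 := by
  rcases Nat.even_or_odd i with he | ho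
  · rw [sigma_pow_even (Nat.even_iff.mp he)] at h
    simp at h
    exact absurd h (by decide)
  · exact Nat.odd_iff.mp ho

/-- conjugation of `⟨p, σ⟩` by an element outside `Htwo` swaps the coordinates. -/
lemma conj_odd (g : Hfour H) (hg : g ∉ Htwo H) (p : H × H) :
    g * (⟨p, σ⟩ : Hfour H) * g⁻¹ =
      ⟨(g.left.1 * p.2 * g.left.1⁻¹, g.left.2 * p.1 * g.left.2⁻¹), σ⟩ := by
  have hgp := not_mem_Htwo_parity hg
  have hφg : swapAction H g.right = swapAut H := swapAction_eq_swap hgp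
  have hparity : (Multiplicative.toAdd (g.right * σ)).val % 2 = 1 := by
    revert hgp
    simp only [toAdd_mul]
    generalize Multiplicative.toAdd g.right = z
    revert z; decide
  have hinvparity : (Multiplicative.toAdd (g.right⁻¹)).val % 2 = 1 := by
    revert hgp
    simp only [toAdd_inv]
    generalize Multiplicative.toAdd g.right = z
    revert z; decide
  refine SemidirectProduct.ext ?_ ?_
  · rw [SemidirectProduct.mul_left, SemidirectProduct.mul_left,
      SemidirectProduct.mul_right, SemidirectProduct.inv_left, hφg,
      swapAction_eq_swap hparity, swapAction_eq_swap hinvparity]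
    ext <;> simp [swapAut]
  · rw [SemidirectProduct.mul_right, SemidirectProduct.mul_right,
      SemidirectProduct.inv_right]
    simp [mul_comm]

end Helpers4

section Helpers5
variable {H : Type*} [Group H]

local notation "σ" => Multiplicative.ofAdd (2 : ZMod 4)

lemma sigma_orders {α₁ α₂ γ₁ γ₂ : H} {s : Hfour H} {n m : ℕ}
    (hd1 : orderOf α₁ ∣ n) (hd2 : orderOf γ₁ ∣ n) (hd3 : orderOf (α₁ * γ₁) ∣ n)
    (he1 : orderOf α₂ ∣ m) (he2 : orderOf γ₂ ∣ m) (he3 : orderOf (α₂ * γ₂) ∣ m)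
    (hs : s ∈ mixedSigma (Htwo H) (⟨(α₁, α₂), σ⟩ : Hfour H) (⟨(γ₁, γ₂), σ⟩ : Hfour H)) :
    orderOf s.left.1 ∣ n ∧ orderOf s.left.2 ∣ m := by
  obtain ⟨i, x, y, hc | hc | hc⟩ := sigma_mem hs <;> rw [hc] <;> constructor
  · show orderOf (x * α₁ ^ i * x⁻¹) ∣ n
    rw [orderOf_conj']; exact (orderOf_pow_dvd i).trans hd1
  · show orderOf (y * α₂ ^ i * y⁻¹) ∣ m
    rw [orderOf_conj']; exact (orderOf_pow_dvd i).trans he1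
  · show orderOf (x * γ₁ ^ i * x⁻¹) ∣ n
    rw [orderOf_conj']; exact (orderOf_pow_dvd i).trans hd2
  · show orderOf (y * γ₂ ^ i * y⁻¹) ∣ m
    rw [orderOf_conj']; exact (orderOf_pow_dvd i).trans he2
  · show orderOf (x * (α₁ * γ₁) ^ i * x⁻¹) ∣ n
    rw [orderOf_conj']; exact (orderOf_pow_dvd i).trans hd3
  · show orderOf (y * (α₂ * γ₂) ^ i * y⁻¹) ∣ m
    rw [orderOf_conj']; exact (orderOf_pow_dvd i).trans he3

lemma sigma_right_eq_one {α₁ α₂ γ₁ γ₂ : H} {s : Hfour H}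
    (hα : Even (orderOf α₁)) (hγ : Even (orderOf γ₁))
    (hs : s ∈ mixedSigma (Htwo H) (⟨(α₁, α₂), σ⟩ : Hfour H) (⟨(γ₁, γ₂), σ⟩ : Hfour H))
    (h0 : s.left.1 = 1) : s.right = 1 := by
  obtain ⟨i, x, y, hc | hc | hc⟩ := sigma_mem hs
  · rw [hc] at h0 ⊢
    have h1 : α₁ ^ i = 1 := conj_eq_one' h0
    have h2 : 2 ∣ i := hα.two_dvd.trans (orderOf_dvd_iff_pow_eq_one.mpr h1)
    show (σ : Multiplicative (ZMod 4)) ^ i = 1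
    exact sigma_pow_even (by omega)
  · rw [hc] at h0 ⊢
    have h1 : γ₁ ^ i = 1 := conj_eq_one' h0
    have h2 : 2 ∣ i := hγ.two_dvd.trans (orderOf_dvd_iff_pow_eq_one.mpr h1)
    show (σ : Multiplicative (ZMod 4)) ^ i = 1
    exact sigma_pow_even (by omega)
  · rw [hc]

end Helpers5

theorem mixed_beauville_structure_on_Hfour
    (H : Type*) [Group H] [Finite H] [Nontrivial H]
    (a₁ c₁ a₂ c₂ : H)
    (h1 : Even (orderOf a₁) ∧ Even (orderOf c₁))
    (h2 : Subgroup.closure {a₁ ^ 2, a₁ * c₁, c₁ ^ 2} = ⊤)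
    (h3 : Subgroup.closure {a₂, c₂} = ⊤)
    (h4 : Nat.Coprime (orderOf a₁ * orderOf c₁ * orderOf (a₁ * c₁))
      (orderOf a₂ * orderOf c₂ * orderOf (a₂ * c₂))) :
    ∀ (a c : Hfour H),
      a = ⟨(a₁, a₂), Multiplicative.ofAdd (2 : ZMod 4)⟩ →
      c = ⟨(c₁, c₂), Multiplicative.ofAdd (2 : ZMod 4)⟩ →
      (Htwo H).index = 2 ∧
      Subgroup.closure {a, c} = Htwo H ∧
      ∀ g : Hfour H, g ∉ Htwo H →
        ((∀ γ ∈ Htwo H, g * γ * g * γ ∉ mixedSigma (Htwo H) a c) ∧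
          mixedSigma (Htwo H) a c ∩
            mixedSigma (Htwo H) (g * a * g⁻¹) (g * c * g⁻¹) = {1}) := by
  intro a c ha hc
  subst ha; subst hc
  refine ⟨Htwo_index_two H, closure_eq_Htwo a₁ c₁ a₂ c₂ h1 h2 h3 h4, ?_⟩
  intro g hg
  set n₁ := orderOf a₁ * orderOf c₁ * orderOf (a₁ * c₁) with hn₁
  set n₂ := orderOf a₂ * orderOf c₂ * orderOf (a₂ * c₂) with hn₂
  have hda₁ : orderOf a₁ ∣ n₁ := Dvd.dvd.mul_right (dvd_mul_right _ _) _
  have hdc₁ : orderOf c₁ ∣ n₁ := Dvd.dvd.mul_right (dvd_mul_left _ _) _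
  have hdac₁ : orderOf (a₁ * c₁) ∣ n₁ := dvd_mul_left _ _
  have hda₂ : orderOf a₂ ∣ n₂ := Dvd.dvd.mul_right (dvd_mul_right _ _) _
  have hdc₂ : orderOf c₂ ∣ n₂ := Dvd.dvd.mul_right (dvd_mul_left _ _) _
  have hdac₂ : orderOf (a₂ * c₂) ∣ n₂ := dvd_mul_left _ _
  have key : ∀ d : ℕ, d ∣ n₁ → d ∣ n₂ → d = 1 := by
    intro d hd1 hd2
    have := (Nat.Coprime.coprime_dvd_left hd1 h4).coprime_dvd_right hd2
    rwa [Nat.Coprime, Nat.gcd_self] at this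
  have hgp := not_mem_Htwo_parity hg
  constructor
  · -- part (i)
    intro γ hγ hmem
    have hγr := mem_Htwo_iff.mp hγ
    have hqr : Multiplicative.toAdd ((g * γ * g * γ).right) = 2 := by
      have he : (g * γ * g * γ).right = g.right * γ.right * g.right * γ.right := rfl
      rw [he]
      simp only [toAdd_mul]
      revert hgp hγr
      generalize Multiplicative.toAdd g.right = z
      generalize Multiplicative.toAdd γ.right = w
      revert z w
      decide
    have hgγp : (Multiplicative.toAdd ((g * γ).right)).val % 2 = 1 := by
      have he : (g * γ).right = g.right * γ.right := rfl
      rw [he]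
      simp only [toAdd_mul]
      revert hgp hγr
      generalize Multiplicative.toAdd g.right = z
      generalize Multiplicative.toAdd γ.right = w
      revert z w
      decide
    have hql : (g * γ * g * γ).left =
        ((g * γ).left.1 * (g * γ).left.2, (g * γ).left.2 * (g * γ).left.1) := by
      have hassoc : g * γ * g * γ = (g * γ) * (g * γ) := by group
      rw [hassoc, SemidirectProduct.mul_left, swapAction_eq_swap hgγp]
      ext <;> simp [swapAut]
    have hordeq : orderOf ((g * γ * g * γ).left.1) = orderOf ((g * γ * g * γ).left.2) := by
      rw [hql]
      exact orderOf_mul_comm' _ _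
    obtain ⟨i, x, y, hcs | hcs | hcs⟩ := sigma_mem hmem
    · rw [hcs] at hqr hordeq
      have hi : i % 2 = 1 := sigma_pow_right_two hqr
      have h5 : orderOf (a₁ ^ i) = orderOf (a₂ ^ i) := by
        rw [← orderOf_conj' x (a₁ ^ i), ← orderOf_conj' y (a₂ ^ i)]
        exact hordeq
      have h6 : orderOf (a₁ ^ i) = 1 :=
        key _ ((orderOf_pow_dvd i).trans hda₁) (h5 ▸ (orderOf_pow_dvd i).trans hda₂)
      have h7 : 2 ∣ i := h1.1.two_dvd.trans
        (orderOf_dvd_iff_pow_eq_one.mpr (orderOf_eq_one_iff.mp h6))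
      omega
    · rw [hcs] at hqr hordeq
      have hi : i % 2 = 1 := sigma_pow_right_two hqr
      have h5 : orderOf (c₁ ^ i) = orderOf (c₂ ^ i) := by
        rw [← orderOf_conj' x (c₁ ^ i), ← orderOf_conj' y (c₂ ^ i)]
        exact hordeq
      have h6 : orderOf (c₁ ^ i) = 1 :=
        key _ ((orderOf_pow_dvd i).trans hdc₁) (h5 ▸ (orderOf_pow_dvd i).trans hdc₂)
      have h7 : 2 ∣ i := h1.2.two_dvd.trans
        (orderOf_dvd_iff_pow_eq_one.mpr (orderOf_eq_one_iff.mp h6))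
      omega
    · rw [hcs] at hqr
      have hne : ¬ (Multiplicative.toAdd (1 : Multiplicative (ZMod 4)) = 2) := by decide
      exact hne hqr
  · -- part (ii)
    have hga := conj_odd g hg (a₁, a₂)
    have hgc := conj_odd g hg (c₁, c₂)
    refine Set.eq_singleton_iff_unique_mem.mpr
      ⟨⟨one_mem_mixedSigma _ _ _, one_mem_mixedSigma _ _ _⟩, ?_⟩
    rintro x ⟨hx1, hx2⟩
    rw [hga, hgc] at hx2
    have o1 := sigma_orders hda₁ hdc₁ hdac₁ hda₂ hdc₂ hdac₂ hx1
    have d1' : orderOf (g.left.1 * a₂ * g.left.1⁻¹) ∣ n₂ := by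
      rw [orderOf_conj']; exact hda₂
    have d2' : orderOf (g.left.1 * c₂ * g.left.1⁻¹) ∣ n₂ := by
      rw [orderOf_conj']; exact hdc₂
    have d3' : orderOf ((g.left.1 * a₂ * g.left.1⁻¹) * (g.left.1 * c₂ * g.left.1⁻¹)) ∣ n₂ := by
      rw [conj_mul_conj, orderOf_conj']; exact hdac₂
    have e1' : orderOf (g.left.2 * a₁ * g.left.2⁻¹) ∣ n₁ := by
      rw [orderOf_conj']; exact hda₁
    have e2' : orderOf (g.left.2 * c₁ * g.left.2⁻¹) ∣ n₁ := by
      rw [orderOf_conj']; exact hdc₁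
    have e3' : orderOf ((g.left.2 * a₁ * g.left.2⁻¹) * (g.left.2 * c₁ * g.left.2⁻¹)) ∣ n₁ := by
      rw [conj_mul_conj, orderOf_conj']; exact hdac₁
    have o2 := sigma_orders d1' d2' d3' e1' e2' e3' hx2
    have hx11 : x.left.1 = 1 := orderOf_eq_one_iff.mp (key _ o1.1 o2.1)
    have hx12 : x.left.2 = 1 := orderOf_eq_one_iff.mp (key _ o2.2 o1.2)
    have hxr : x.right = 1 := sigma_right_eq_one h1.1 h1.2 hx1 hx11
    exact SemidirectProduct.ext (Prod.ext hx11 hx12) hxr
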